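/- Let k be a positive integer, C a k-qubit Clifford operation, and j ∈ {1,…,k}. Then there exists a string t ∈ {0,+,↻}^k such that the j-th qubit of C|t⟩ is in a standard basis state; that is, C|t⟩ = |φ_0⟩|a⟩|φ_1⟩ for some bit a ∈ {0,1} and pure states |φ_0⟩ on j−1 qubits and |φ_1⟩ on k−j qubits. -/

import Mathlib

open Matrix Complex ComplexOrder

noncomputable section

def pX : Matrix (Fin 2) (Fin 2) ℂ := !![0, 1; 1, 0]
def pZ : Matrix (Fin 2) (Fin 2) ℂ := !![1, 0; 0, -1]

def pauli : Fin 4 → Matrix (Fin 2) (Fin 2) ℂ :=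
  ![1, pX, !![0, -Complex.I; Complex.I, 0], pZ]

/-- The Pauli operator `X^a Z^b` on `k` qubits. -/
def XZ (k : ℕ) (a b : Fin k → Fin 2) : Matrix (Fin k → Fin 2) (Fin k → Fin 2) ℂ :=
  Matrix.of fun x y => ∏ j, (pX ^ (a j).val * pZ ^ (b j).val) (x j) (y j)

/-- Membership in the `k`-qubit Pauli group. -/
def InPauliGroup {k : ℕ} (A : Matrix (Fin k → Fin 2) (Fin k → Fin 2) ℂ) : Prop :=
  ∃ (α : ℂ) (a b : Fin k → Fin 2),
    α ∈ ({1, Complex.I, -1, -Complex.I} : Set ℂ) ∧ A = α • XZ k a b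

/-- A `k`-qubit Clifford operation: a unitary normalizing the Pauli group. -/
def IsClifford {k : ℕ} (C : Matrix (Fin k → Fin 2) (Fin k → Fin 2) ℂ) : Prop :=
  Cᴴ * C = 1 ∧ ∀ A, InPauliGroup A → InPauliGroup (C * A * Cᴴ)

/-- The single-qubit states `|0⟩`, `|+⟩ = (|0⟩+|1⟩)/√2`,
`|↻⟩ = (|0⟩−i|1⟩)/√2` (eigenvectors of `Z`, `X`, `Y` respectively). -/
def trapState : Fin 3 → (Fin 2 → ℂ) :=
  ![![1, 0],
    ![1/(Real.sqrt 2 : ℂ), 1/(Real.sqrt 2 : ℂ)],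
    ![1/(Real.sqrt 2 : ℂ), -Complex.I/(Real.sqrt 2 : ℂ)]]

/-- The product state `|t⟩` for `t ∈ {0,+,↻}^k`. -/
def ketTrap {k : ℕ} (t : Fin k → Fin 3) : (Fin k → Fin 2) → ℂ :=
  fun x => ∏ i, trapState (t i) (x i)

/-- The operator `I^{⊗(j−1)} ⊗ Z ⊗ I^{⊗(k−j)}`: Pauli `Z` on qubit `j`. -/
def Zat {k : ℕ} (j : Fin k) : Matrix (Fin k → Fin 2) (Fin k → Fin 2) ℂ :=
  Matrix.of fun x y => if x = y then (if x j = 1 then -1 else 1) else 0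

/-!
Since conjugation by `C` is an injective self-map of the finite Pauli group, `Z_j = C P C†` for
some Pauli operator `P = α X^a Z^b`. Every single-qubit `X^{a_i} Z^{b_i}` has one of `|0⟩`, `|+⟩`,
`|↻⟩` as an eigenvector, so some `|t⟩` is an eigenvector of `P`; then `C|t⟩` is an eigenvector of
`Z_j`, hence supported on the basis strings with a fixed `j`-th bit.
-/

theorem Set.Finite.surjOn_conj {M : Type*} [Monoid M] {S : Set M} (hS : S.Finite) {u v : M}
    (hvu : v * u = 1) (hmaps : Set.MapsTo (fun A => u * A * v) S S) :
    Set.SurjOn (fun A => u * A * v) S S := by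
  refine ((hS.injOn_iff_bijOn_of_mapsTo hmaps).mp fun A _ B _ hAB => ?_).surjOn
  have hAB : u * A * v = u * B * v := hAB
  calc A = v * u * A * (v * u) := by rw [hvu, one_mul, mul_one]
    _ = v * (u * A * v) * u := by simp only [mul_assoc]
    _ = v * (u * B * v) * u := by rw [hAB]
    _ = v * u * B * (v * u) := by simp only [mul_assoc]
    _ = B := by rw [hvu, one_mul, mul_one]

theorem setOf_inPauliGroup_finite (k : ℕ) :
    {A : Matrix _ _ ℂ | InPauliGroup (k := k) A}.Finite := by
  refine (Set.finite_range fun p : Fin 4 × (Fin k → Fin 2) × (Fin k → Fin 2) =>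
    ![1, Complex.I, -1, -Complex.I] p.1 • XZ k p.2.1 p.2.2).subset ?_
  rintro A ⟨α, a, b, hα, rfl⟩
  rcases hα with rfl | rfl | rfl | rfl
  exacts [⟨(0, a, b), by simp⟩, ⟨(1, a, b), by simp⟩, ⟨(2, a, b), by simp⟩, ⟨(3, a, b), by simp⟩]

theorem IsClifford.exists_conj_eq {k : ℕ} {C : Matrix (Fin k → Fin 2) (Fin k → Fin 2) ℂ}
    (hC : IsClifford C) {B : Matrix (Fin k → Fin 2) (Fin k → Fin 2) ℂ} (hB : InPauliGroup B) :
    ∃ A, InPauliGroup A ∧ C * A * Cᴴ = B :=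
  (setOf_inPauliGroup_finite k).surjOn_conj hC.1 hC.2 hB

theorem Zat_eq_XZ {k : ℕ} (j : Fin k) : Zat j = XZ k 0 (Pi.single j 1) := by
  ext x y
  simp only [Zat, XZ, of_apply, Pi.zero_apply, Fin.val_zero, pow_zero, one_mul]
  by_cases hxy : x = y
  · subst hxy
    rw [if_pos rfl, Finset.prod_eq_single j (fun i _ hij => by simp [hij]) (by simp)]
    generalize x j = c
    fin_cases c <;> simp [pZ]
  · obtain ⟨i, hi⟩ : ∃ i, x i ≠ y i := Function.ne_iff.mp hxy
    rw [if_neg hxy, eq_comm]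
    refine Finset.prod_eq_zero (Finset.mem_univ i) ?_
    by_cases hij : i = j
    · subst hij
      revert hi
      generalize x i = c
      generalize y i = d
      fin_cases c <;> fin_cases d <;> simp [pZ]
    · simp [hij, one_apply_ne hi]

theorem inPauliGroup_Zat {k : ℕ} (j : Fin k) : InPauliGroup (Zat j) :=
  ⟨1, 0, Pi.single j 1, by simp, by rw [one_smul, Zat_eq_XZ]⟩

def eigenTrapIndex (a b : Fin 2) : Fin 3 := if a = 0 then 0 else if b = 0 then 1 else 2

def eigenTrapValue (a b : Fin 2) : ℂ := if a = 0 then 1 else if b = 0 then 1 else Complex.I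

theorem pX_pow_mul_pZ_pow_mulVec_trapState (a b : Fin 2) :
    (pX ^ a.val * pZ ^ b.val) *ᵥ trapState (eigenTrapIndex a b) =
      eigenTrapValue a b • trapState (eigenTrapIndex a b) := by
  fin_cases a <;> fin_cases b <;> ext x <;> fin_cases x <;>
    simp [pX, pZ, trapState, eigenTrapIndex, eigenTrapValue, mulVec, dotProduct,
      Fin.sum_univ_two, mul_apply, pow_succ, div_eq_mul_inv, ← mul_assoc]

theorem XZ_mulVec_ketTrap {k : ℕ} (a b : Fin k → Fin 2) :
    XZ k a b *ᵥ ketTrap (fun i => eigenTrapIndex (a i) (b i)) =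
      (∏ i, eigenTrapValue (a i) (b i)) • ketTrap (fun i => eigenTrapIndex (a i) (b i)) := by
  funext x
  set M : Fin k → Matrix (Fin 2) (Fin 2) ℂ := fun i => pX ^ (a i).val * pZ ^ (b i).val
  set ψ : Fin k → Fin 2 → ℂ := fun i => trapState (eigenTrapIndex (a i) (b i))
  have factor (i : Fin k) : ∑ c, M i (x i) c * ψ i c = eigenTrapValue (a i) (b i) * ψ i (x i) :=
    congrFun (pX_pow_mul_pZ_pow_mulVec_trapState (a i) (b i)) (x i)
  calc (XZ k a b *ᵥ ketTrap fun i => eigenTrapIndex (a i) (b i)) x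
      = ∑ y : Fin k → Fin 2, ∏ i, M i (x i) (y i) * ψ i (y i) := by
        simp only [mulVec, dotProduct, XZ, ketTrap, of_apply, Finset.prod_mul_distrib, M, ψ]
    _ = ∏ i, ∑ c, M i (x i) c * ψ i c := (Fintype.prod_sum fun i c => M i (x i) c * ψ i c).symm
    _ = ∏ i, eigenTrapValue (a i) (b i) * ψ i (x i) := Finset.prod_congr rfl fun i _ => factor i
    _ = _ := by simp only [Finset.prod_mul_distrib, Pi.smul_apply, smul_eq_mul, ketTrap, ψ]

theorem Zat_mulVec_apply {k : ℕ} (j : Fin k) (v : (Fin k → Fin 2) → ℂ) (x : Fin k → Fin 2) :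
    (Zat j *ᵥ v) x = (if x j = 1 then -1 else 1) * v x := by
  simp [Zat, mulVec, dotProduct, ite_mul]

theorem exists_bit_support_of_Zat_mulVec_eq_smul {k : ℕ} {j : Fin k}
    {v : (Fin k → Fin 2) → ℂ} {μ : ℂ} (hv : Zat j *ᵥ v = μ • v) :
    ∃ a : Fin 2, ∀ x : Fin k → Fin 2, x j ≠ a → v x = 0 := by
  have hsign (x : Fin k → Fin 2) : (if x j = 1 then -1 else 1) * v x = μ * v x := by
    rw [← Zat_mulVec_apply, hv, Pi.smul_apply, smul_eq_mul]
  by_cases hμ : μ = 1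
  · refine ⟨0, fun x hx0 => ?_⟩
    have := hsign x
    rw [if_pos (Fin.eq_one_of_ne_zero _ hx0), hμ] at this
    linear_combination (-1 / 2 : ℂ) * this
  · refine ⟨1, fun x hx1 => ?_⟩
    have := hsign x
    rw [if_neg hx1, one_mul] at this
    exact (mul_eq_zero.mp (by linear_combination this : (1 - μ) * v x = 0)).resolve_left
      (sub_ne_zero.mpr (Ne.symm hμ))

theorem clifford_trap_standard_basis_qubit_general (k : ℕ)
    (C : Matrix (Fin k → Fin 2) (Fin k → Fin 2) ℂ) (hC : IsClifford C)
    (j : Fin k) :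
    ∃ (t : Fin k → Fin 3) (a : Fin 2),
      ∀ x : Fin k → Fin 2, x j ≠ a → C.mulVec (ketTrap t) x = 0 := by
  obtain ⟨_, ⟨α, a, b, -, rfl⟩, hconj⟩ := hC.exists_conj_eq (inPauliGroup_Zat j)
  have hcomm : Zat j * C = C * (α • XZ k a b) := by
    rw [← hconj, mul_assoc, mul_assoc, hC.1, mul_one]
  refine ⟨fun i => eigenTrapIndex (a i) (b i),
    exists_bit_support_of_Zat_mulVec_eq_smul (μ := α * ∏ i, eigenTrapValue (a i) (b i)) ?_⟩
  rw [mulVec_mulVec, hcomm, ← mulVec_mulVec, smul_mulVec, XZ_mulVec_ketTrap, smul_smul,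
    mulVec_smul]

/-- for every `k`-qubit Clifford operation `C` and every
`j ∈ {1,…,k}`, there is a string `t ∈ {0,+,↻}^k` and a bit `a` such that the
`j`-th qubit of `C|t⟩` is left in the standard basis state `|a⟩`, i.e. the
amplitude of `C|t⟩` vanishes on every basis string whose `j`-th bit is not
`a`. -/
theorem clifford_trap_standard_basis_qubit (k : ℕ) (hk : 0 < k)
    (C : Matrix (Fin k → Fin 2) (Fin k → Fin 2) ℂ) (hC : IsClifford C)
    (j : Fin k) :
    ∃ (t : Fin k → Fin 3) (a : Fin 2),
      ∀ x : Fin k → Fin 2, x j ≠ a → C.mulVec (ketTrap t) x = 0 :=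
  clifford_trap_standard_basis_qubit_general k C hC j
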